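/- Let d ≥ 2 and let x, y, z ∈ ℝ^{d+2} be nonzero vectors with q(x) = q(y) = q(z) = 0, such that the restriction of q to Span(x, y, z) has signature (2,1) (i.e. there exist u₁, u₂, u₃ spanning Span(x, y, z) with ⟨uᵢ, uⱼ⟩ = 0 for i ≠ j, q(u₁) = q(u₂) = 1, q(u₃) = −1). Then there exist unique ε_y, ε_z ∈ {−1, 1} such that ⟨x, ε_y·y⟩ < 0, ⟨x, ε_z·z⟩ < 0 and ⟨ε_y·y, ε_z·z⟩ < 0. -/
import Mathlib


noncomputable section

/-- The coefficient of the signature-(d,2) quadratic form: +1 on the first `d`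
coordinates, −1 on the last two. -/
def eps (d : ℕ) (i : Fin (d + 2)) : ℝ := if (i : ℕ) < d then 1 else -1

/-- The bilinear form ⟨·,·⟩ of signature (d,2) on ℝ^{d+2}. -/
def bil (d : ℕ) (x y : EuclideanSpace ℝ (Fin (d + 2))) : ℝ := ∑ i, eps d i * x i * y i

/-- The quadratic form q of signature (d,2). -/
def quad (d : ℕ) (x : EuclideanSpace ℝ (Fin (d + 2))) : ℝ := bil d x x

lemma bil_comm (d : ℕ) (x y : EuclideanSpace ℝ (Fin (d+2))) : bil d x y = bil d y x := by
  unfold bil; exact Finset.sum_congr rfl fun i _ => by ring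

lemma bil_add_left (d : ℕ) (x x' y : EuclideanSpace ℝ (Fin (d+2))) :
    bil d (x + x') y = bil d x y + bil d x' y := by
  unfold bil; rw [← Finset.sum_add_distrib]
  exact Finset.sum_congr rfl fun i _ => by simp [PiLp.add_apply]; ring

lemma bil_smul_left (d : ℕ) (c : ℝ) (x y : EuclideanSpace ℝ (Fin (d+2))) :
    bil d (c • x) y = c * bil d x y := by
  unfold bil; rw [Finset.mul_sum]
  exact Finset.sum_congr rfl fun i _ => by simp [PiLp.smul_apply]; ring

lemma bil_smul_right (d : ℕ) (c : ℝ) (x y : EuclideanSpace ℝ (Fin (d+2))) :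
    bil d x (c • y) = c * bil d x y := by
  rw [bil_comm, bil_smul_left, bil_comm]

lemma bil_add_right (d : ℕ) (x y y' : EuclideanSpace ℝ (Fin (d+2))) :
    bil d x (y + y') = bil d x y + bil d x y' := by
  rw [bil_comm, bil_add_left, bil_comm d x y, bil_comm d x y']

lemma mem_span_triple {M : Type*} [AddCommGroup M] [Module ℝ M] {u v w t : M}
    (h : t ∈ Submodule.span ℝ ({u, v, w} : Set M)) :
    ∃ a b c : ℝ, a • u + b • v + c • w = t := by
  rw [show ({u, v, w} : Set M) = insert u {v, w} from rfl, Submodule.mem_span_insert] at h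
  obtain ⟨a, t', ht', rfl⟩ := h
  rw [Submodule.mem_span_pair] at ht'
  obtain ⟨b, c, rfl⟩ := ht'
  exact ⟨a, b, c, by abel⟩

lemma sign_pick (A : ℝ) (hA : A ≠ 0) : (if A < 0 then (1:ℝ) else -1) * A < 0 := by
  split_ifs with h
  · linarith
  · have : 0 < A := lt_of_le_of_ne (not_lt.1 h) (Ne.symm hA)
    linarith

lemma sign_unique (A s t : ℝ) (hs : s = 1 ∨ s = -1) (ht : t = 1 ∨ t = -1)
    (h1 : s * A < 0) (h2 : t * A < 0) : s = t := by
  rcases hs with rfl | rfl <;> rcases ht with rfl | rfl <;> first | rfl | linarith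

lemma sign_third (A B C s t : ℝ) (hs : s = 1 ∨ s = -1) (ht : t = 1 ∨ t = -1)
    (h1 : s * A < 0) (h2 : t * B < 0) (h3 : A * B * C < 0) : s * (t * C) < 0 := by
  rcases hs with rfl | rfl <;> rcases ht with rfl | rfl <;>
    nlinarith [h3, mul_pos_of_neg_of_neg h1 h2]

lemma product_neg (a₁ a₂ a₃ b₁ b₂ b₃ c₁ c₂ c₃ p₁ p₂ p₃ q₁ q₂ q₃ r₁ r₂ r₃ : ℝ)
    (hqx : a₁ * a₁ + a₂ * a₂ - a₃ * a₃ = 0)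
    (hqy : b₁ * b₁ + b₂ * b₂ - b₃ * b₃ = 0)
    (hqz : c₁ * c₁ + c₂ * c₂ - c₃ * c₃ = 0)
    (E11 : p₁ * a₁ + p₂ * b₁ + p₃ * c₁ = 1)
    (E12 : p₁ * a₂ + p₂ * b₂ + p₃ * c₂ = 0)
    (E13 : p₁ * a₃ + p₂ * b₃ + p₃ * c₃ = 0)
    (E21 : q₁ * a₁ + q₂ * b₁ + q₃ * c₁ = 0)
    (E22 : q₁ * a₂ + q₂ * b₂ + q₃ * c₂ = 1)
    (E23 : q₁ * a₃ + q₂ * b₃ + q₃ * c₃ = 0)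
    (E31 : r₁ * a₁ + r₂ * b₁ + r₃ * c₁ = 0)
    (E32 : r₁ * a₂ + r₂ * b₂ + r₃ * c₂ = 0)
    (E33 : r₁ * a₃ + r₂ * b₃ + r₃ * c₃ = 1) :
    (a₁ * b₁ + a₂ * b₂ - a₃ * b₃) * (a₁ * c₁ + a₂ * c₂ - a₃ * c₃)
      * (b₁ * c₁ + b₂ * c₂ - b₃ * c₃) < 0 := by
  have hPN : (!![p₁, p₂, p₃; q₁, q₂, q₃; r₁, r₂, r₃] : Matrix (Fin 3) (Fin 3) ℝ)
      * !![a₁, a₂, a₃; b₁, b₂, b₃; c₁, c₂, c₃] = 1 := by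
    ext i j
    fin_cases i <;> fin_cases j <;>
      simp [Matrix.mul_apply, Fin.sum_univ_three, Matrix.one_apply] <;>
      linarith [E11, E12, E13, E21, E22, E23, E31, E32, E33]
  have hdet : (!![p₁, p₂, p₃; q₁, q₂, q₃; r₁, r₂, r₃] : Matrix (Fin 3) (Fin 3) ℝ).det
      * (!![a₁, a₂, a₃; b₁, b₂, b₃; c₁, c₂, c₃] : Matrix (Fin 3) (Fin 3) ℝ).det = 1 := by
    rw [← Matrix.det_mul, hPN, Matrix.det_one]
  have hNdet : (!![a₁, a₂, a₃; b₁, b₂, b₃; c₁, c₂, c₃] : Matrix (Fin 3) (Fin 3) ℝ).det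
      = a₁ * (b₂ * c₃ - b₃ * c₂) - a₂ * (b₁ * c₃ - b₃ * c₁) + a₃ * (b₁ * c₂ - b₂ * c₁) := by
    rw [Matrix.det_fin_three]; simp; ring
  rw [hNdet] at hdet
  set D := a₁ * (b₂ * c₃ - b₃ * c₂) - a₂ * (b₁ * c₃ - b₃ * c₁) + a₃ * (b₁ * c₂ - b₂ * c₁)
    with hD
  have hD0 : D ≠ 0 := by
    intro h; rw [h, mul_zero] at hdet; norm_num at hdet
  have hpos : 0 < D ^ 2 := by positivity
  have key : 2 * ((a₁ * b₁ + a₂ * b₂ - a₃ * b₃) * (a₁ * c₁ + a₂ * c₂ - a₃ * c₃)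
      * (b₁ * c₁ + b₂ * c₂ - b₃ * c₃)) = -(D ^ 2) := by
    rw [hD]
    linear_combination ((b₁ * c₁ + b₂ * c₂ - b₃ * c₃) ^ 2
        - (b₁ * b₁ + b₂ * b₂ - b₃ * b₃) * (c₁ * c₁ + c₂ * c₂ - c₃ * c₃)) * hqx
      + (a₁ * c₁ + a₂ * c₂ - a₃ * c₃) ^ 2 * hqy
      + (a₁ * b₁ + a₂ * b₂ - a₃ * b₃) ^ 2 * hqz
  linarith [key, hpos]

/-- if q restricted to Span(x,y,z) has signature (2,1), then there
are unique signs ε_y, ε_z ∈ {−1,1} making {[x], [ε_y y], [ε_z z]} acausal. -/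
theorem acausal_signs_exist_unique (d : ℕ) (hd : 2 ≤ d)
    (x y z : EuclideanSpace ℝ (Fin (d + 2)))
    (hx0 : x ≠ 0) (hy0 : y ≠ 0) (hz0 : z ≠ 0)
    (hx : quad d x = 0) (hy : quad d y = 0) (hz : quad d z = 0)
    (hsig : ∃ u₁ u₂ u₃ : EuclideanSpace ℝ (Fin (d + 2)),
        Submodule.span ℝ {u₁, u₂, u₃} = Submodule.span ℝ {x, y, z} ∧
        bil d u₁ u₂ = 0 ∧ bil d u₁ u₃ = 0 ∧ bil d u₂ u₃ = 0 ∧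
        quad d u₁ = 1 ∧ quad d u₂ = 1 ∧ quad d u₃ = -1) :
    ∃! p : ℝ × ℝ,
      (p.1 = 1 ∨ p.1 = -1) ∧ (p.2 = 1 ∨ p.2 = -1) ∧
      bil d x (p.1 • y) < 0 ∧ bil d x (p.2 • z) < 0 ∧
      bil d (p.1 • y) (p.2 • z) < 0 := by
  obtain ⟨u₁, u₂, u₃, hspan, h12, h13, h23, h1, h2, h3⟩ := hsig
  unfold quad at hx hy hz h1 h2 h3
  have h21 : bil d u₂ u₁ = 0 := (bil_comm d u₂ u₁).trans h12
  have h31 : bil d u₃ u₁ = 0 := (bil_comm d u₃ u₁).trans h13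
  have h32 : bil d u₃ u₂ = 0 := (bil_comm d u₃ u₂).trans h23
  -- decompose x, y, z in the u basis
  obtain ⟨a₁, a₂, a₃, hxe⟩ := mem_span_triple (u := u₁) (v := u₂) (w := u₃) (t := x)
    (by rw [hspan]; exact Submodule.subset_span (by simp))
  obtain ⟨b₁, b₂, b₃, hye⟩ := mem_span_triple (u := u₁) (v := u₂) (w := u₃) (t := y)
    (by rw [hspan]; exact Submodule.subset_span (by simp))
  obtain ⟨c₁, c₂, c₃, hze⟩ := mem_span_triple (u := u₁) (v := u₂) (w := u₃) (t := z)
    (by rw [hspan]; exact Submodule.subset_span (by simp))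
  -- decompose u₁, u₂, u₃ in terms of x, y, z
  obtain ⟨p₁, p₂, p₃, hu1⟩ := mem_span_triple (u := x) (v := y) (w := z) (t := u₁)
    (by rw [← hspan]; exact Submodule.subset_span (by simp))
  obtain ⟨q₁, q₂, q₃, hu2⟩ := mem_span_triple (u := x) (v := y) (w := z) (t := u₂)
    (by rw [← hspan]; exact Submodule.subset_span (by simp))
  obtain ⟨r₁, r₂, r₃, hu3⟩ := mem_span_triple (u := x) (v := y) (w := z) (t := u₃)
    (by rw [← hspan]; exact Submodule.subset_span (by simp))
  -- pairings of expanded vectors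
  have expand : ∀ s₁ s₂ s₃ t₁ t₂ t₃ : ℝ,
      bil d (s₁ • u₁ + s₂ • u₂ + s₃ • u₃) (t₁ • u₁ + t₂ • u₂ + t₃ • u₃)
        = s₁ * t₁ + s₂ * t₂ - s₃ * t₃ := by
    intro s₁ s₂ s₃ t₁ t₂ t₃
    simp only [bil_add_left, bil_add_right, bil_smul_left, bil_smul_right,
      h12, h13, h23, h21, h31, h32, h1, h2, h3]
    ring
  have expand3 : ∀ (s₁ s₂ s₃ : ℝ) (w : EuclideanSpace ℝ (Fin (d+2))),
      bil d (s₁ • u₁ + s₂ • u₂ + s₃ • u₃) w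
        = s₁ * bil d u₁ w + s₂ * bil d u₂ w + s₃ * bil d u₃ w := by
    intro s₁ s₂ s₃ w
    simp only [bil_add_left, bil_smul_left]
  have hA : bil d x y = a₁ * b₁ + a₂ * b₂ - a₃ * b₃ := by
    rw [← hxe, ← hye, expand]
  have hB : bil d x z = a₁ * c₁ + a₂ * c₂ - a₃ * c₃ := by
    rw [← hxe, ← hze, expand]
  have hC : bil d y z = b₁ * c₁ + b₂ * c₂ - b₃ * c₃ := by
    rw [← hye, ← hze, expand]
  have hqx : a₁ * a₁ + a₂ * a₂ - a₃ * a₃ = 0 := by rw [← expand, hxe, hx]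
  have hqy : b₁ * b₁ + b₂ * b₂ - b₃ * b₃ = 0 := by rw [← expand, hye, hy]
  have hqz : c₁ * c₁ + c₂ * c₂ - c₃ * c₃ = 0 := by rw [← expand, hze, hz]
  -- pairings of x,y,z against the u's
  have hxu1 : bil d x u₁ = a₁ := by rw [← hxe, expand3, h1, h21, h31]; ring
  have hxu2 : bil d x u₂ = a₂ := by rw [← hxe, expand3, h2, h12, h32]; ring
  have hxu3 : bil d x u₃ = -a₃ := by rw [← hxe, expand3, h3, h13, h23]; ring
  have hyu1 : bil d y u₁ = b₁ := by rw [← hye, expand3, h1, h21, h31]; ring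
  have hyu2 : bil d y u₂ = b₂ := by rw [← hye, expand3, h2, h12, h32]; ring
  have hyu3 : bil d y u₃ = -b₃ := by rw [← hye, expand3, h3, h13, h23]; ring
  have hzu1 : bil d z u₁ = c₁ := by rw [← hze, expand3, h1, h21, h31]; ring
  have hzu2 : bil d z u₂ = c₂ := by rw [← hze, expand3, h2, h12, h32]; ring
  have hzu3 : bil d z u₃ = -c₃ := by rw [← hze, expand3, h3, h13, h23]; ring
  -- the nine equations P * N = 1
  have expand2 : ∀ (s₁ s₂ s₃ : ℝ) (w : EuclideanSpace ℝ (Fin (d+2))),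
      bil d (s₁ • x + s₂ • y + s₃ • z) w
        = s₁ * bil d x w + s₂ * bil d y w + s₃ * bil d z w := by
    intro s₁ s₂ s₃ w
    simp only [bil_add_left, bil_smul_left]
  have E11 : p₁ * a₁ + p₂ * b₁ + p₃ * c₁ = 1 := by
    have := expand2 p₁ p₂ p₃ u₁
    rw [hu1, h1, hxu1, hyu1, hzu1] at this; linarith
  have E12 : p₁ * a₂ + p₂ * b₂ + p₃ * c₂ = 0 := by
    have := expand2 p₁ p₂ p₃ u₂
    rw [hu1, h12, hxu2, hyu2, hzu2] at this; linarith
  have E13 : p₁ * a₃ + p₂ * b₃ + p₃ * c₃ = 0 := by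
    have := expand2 p₁ p₂ p₃ u₃
    rw [hu1, h13, hxu3, hyu3, hzu3] at this; linarith
  have E21 : q₁ * a₁ + q₂ * b₁ + q₃ * c₁ = 0 := by
    have := expand2 q₁ q₂ q₃ u₁
    rw [hu2, h21, hxu1, hyu1, hzu1] at this; linarith
  have E22 : q₁ * a₂ + q₂ * b₂ + q₃ * c₂ = 1 := by
    have := expand2 q₁ q₂ q₃ u₂
    rw [hu2, h2, hxu2, hyu2, hzu2] at this; linarith
  have E23 : q₁ * a₃ + q₂ * b₃ + q₃ * c₃ = 0 := by
    have := expand2 q₁ q₂ q₃ u₃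
    rw [hu2, h23, hxu3, hyu3, hzu3] at this; linarith
  have E31 : r₁ * a₁ + r₂ * b₁ + r₃ * c₁ = 0 := by
    have := expand2 r₁ r₂ r₃ u₁
    rw [hu3, h31, hxu1, hyu1, hzu1] at this; linarith
  have E32 : r₁ * a₂ + r₂ * b₂ + r₃ * c₂ = 0 := by
    have := expand2 r₁ r₂ r₃ u₂
    rw [hu3, h32, hxu2, hyu2, hzu2] at this; linarith
  have E33 : r₁ * a₃ + r₂ * b₃ + r₃ * c₃ = 1 := by
    have := expand2 r₁ r₂ r₃ u₃
    rw [hu3, h3, hxu3, hyu3, hzu3] at this; linarith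
  have habc : bil d x y * bil d x z * bil d y z < 0 := by
    rw [hA, hB, hC]
    exact product_neg a₁ a₂ a₃ b₁ b₂ b₃ c₁ c₂ c₃ p₁ p₂ p₃ q₁ q₂ q₃ r₁ r₂ r₃
      hqx hqy hqz E11 E12 E13 E21 E22 E23 E31 E32 E33
  have hAne : bil d x y ≠ 0 := by
    intro h; rw [h] at habc; simp at habc
  have hBne : bil d x z ≠ 0 := by
    intro h; rw [h] at habc; simp at habc
  refine ⟨⟨if bil d x y < 0 then 1 else -1, if bil d x z < 0 then 1 else -1⟩,
    ⟨?_, ?_, ?_, ?_, ?_⟩, ?_⟩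
  · split_ifs <;> simp
  · split_ifs <;> simp
  · rw [bil_smul_right]; exact sign_pick _ hAne
  · rw [bil_smul_right]; exact sign_pick _ hBne
  · rw [bil_smul_left, bil_smul_right]
    exact sign_third _ _ _ _ _ (by split_ifs <;> simp) (by split_ifs <;> simp)
      (sign_pick _ hAne) (sign_pick _ hBne) habc
  · rintro ⟨s, t⟩ ⟨hs, ht, hsy, hsz, -⟩
    rw [bil_smul_right] at hsy hsz
    have he1 : s = if bil d x y < 0 then 1 else -1 :=
      sign_unique (bil d x y) _ _ hs (by split_ifs <;> simp) hsy (sign_pick _ hAne)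
    have he2 : t = if bil d x z < 0 then 1 else -1 :=
      sign_unique (bil d x z) _ _ ht (by split_ifs <;> simp) hsz (sign_pick _ hBne)
    simp [Prod.ext_iff, he1, he2]
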